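/- arXiv:2308.09888 — 2 statements merged into one kernel-verified Lean document; each statement's English description precedes it below -/
import Mathlib

section
/- Let Û^M_srNMC(λ) = (1/M) Σ_{i=1}^M log[ l(y^(i)|θ^(i),λ) / ((1/M) Σ_{j=1}^M l(y^(i)|θ^(j),λ)) ], where θ^(i) ~ π_θ i.i.d., ε^(i) ~ π_ε i.i.d., and y^(i) = g(θ^(i),ε^(i),λ). Then E[Û^M_srNMC(λ)] ≤ U(λ) for every M > 0, where U(λ) is the expected information gain. -/
/-!
Write `ρ(w) = ∏ₖ l(yₖ|θₖ)` for the joint density of the samples `w = ((θₖ, yₖ))ₖ` and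
`p̂(y) = (1/M) Σⱼ l(y|θⱼ)` for the Monte-Carlo evidence. Since `log x ≥ 1 - 1/x`,
`ρ · (1/M) Σᵢ [log (lᵢ/p(yᵢ)) - log (lᵢ/p̂(yᵢ))] ≥ ρ - H` pointwise, with
`H = ρ · (1/M) Σᵢ p(yᵢ)/p̂(yᵢ)` the averaged posterior-tilted joint density. The left side
integrates to `U - E[Û]`, because the `i`-th logarithm depends on the `i`-th sample only. On the
right, `∫ ρ = 1`, and integrating `H` over the observations first, the `i`-th term contributes
`(1/M) ∫ l(y|θᵢ) p(y)/p̂(y) dy`; these sum to `∫ p = 1`, so `∫ H ≤ 1`.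
-/

open MeasureTheory Real
open scoped ENNReal

theorem Real.one_sub_div_le_log_div_sub_log_div {a p s : ℝ} (ha : 0 < a) (hp : 0 < p)
    (hs : 0 < s) : 1 - p / s ≤ log (a / p) - log (a / s) := by
  have := Real.one_sub_inv_le_log_of_pos (div_pos hs hp)
  rw [inv_div, log_div hs.ne' hp.ne'] at this
  rw [log_div ha.ne' hp.ne', log_div ha.ne' hs.ne']
  linarith

theorem Fintype.prod_update_mul_eval {ι E R : Type*} [Fintype ι] [DecidableEq ι] [CommMonoid R]
    (g : ι → E → R) (φ : E → R) (i : ι) (w : ι → E) :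
    ∏ k, Function.update g i (fun x => g i x * φ x) k (w k) = (∏ k, g k (w k)) * φ (w i) := by
  simp_rw [Function.apply_update (fun k (G : E → R) => G (w k)),
    Finset.prod_update_of_mem (Finset.mem_univ i), ← Finset.mul_prod_erase _ _ (Finset.mem_univ i),
    Finset.sdiff_singleton_eq_erase, mul_right_comm]

namespace MeasureTheory

theorem ofReal_integral_le_lintegral_ofReal {α : Type*} [MeasurableSpace α] {μ : Measure α}
    {f : α → ℝ} (hf : 0 ≤ f) : ENNReal.ofReal (∫ x, f x ∂μ) ≤ ∫⁻ x, ENNReal.ofReal (f x) ∂μ := by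
  simpa [Real.enorm_of_nonneg (integral_nonneg hf), Real.enorm_of_nonneg (hf _)] using
    enorm_integral_le_lintegral_enorm (μ := μ) f

theorem integral_le_integral_of_ae_sub_le_sub {α : Type*} [MeasurableSpace α]
    {μ : Measure α} {ρ h f g : α → ℝ} (hρ : Integrable ρ μ) (hh : Integrable h μ)
    (hf : Integrable f μ) (hg : Integrable g μ) (hle : ∀ᵐ x ∂μ, ρ x - h x ≤ f x - g x)
    (hρh : ∫ x, h x ∂μ ≤ ∫ x, ρ x ∂μ) :
    ∫ x, g x ∂μ ≤ ∫ x, f x ∂μ := by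
  have := integral_mono_ae (hρ.sub hh) (hf.sub hg) hle
  rw [integral_sub' hρ hh, integral_sub' hf hg] at this
  linarith

theorem lintegral_fin_prod_eq_prod {E : Type*} [MeasurableSpace E] (μ : Measure E)
    [SigmaFinite μ] :
    ∀ {n : ℕ} (f : Fin n → E → ℝ≥0∞), (∀ i, Measurable (f i)) →
      ∫⁻ x : Fin n → E, ∏ i, f i (x i) ∂(Measure.pi fun _ => μ) = ∏ i, ∫⁻ y, f i y ∂μ
  | 0, f, _ => by simp
  | n + 1, f, hf => by
      rw [← ((measurePreserving_piFinSuccAbove (fun _ : Fin (n + 1) => μ) 0).symm).lintegral_comp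
        (by fun_prop)]
      simp_rw [MeasurableEquiv.piFinSuccAbove_symm_apply, Fin.insertNthEquiv, Equiv.coe_fn_mk,
        Fin.prod_univ_succ, Fin.insertNth_zero, Fin.cons_zero, Fin.cons_succ]
      rw [← lintegral_fin_prod_eq_prod μ (fun j : Fin n => f j.succ) (fun j => hf j.succ)]
      exact lintegral_prod_mul (hf 0).aemeasurable
        (Finset.measurable_prod _ fun (j : Fin n) _ =>
          (hf j.succ).comp (measurable_pi_apply j)).aemeasurable

theorem lintegral_fintype_prod_eq_prod {ι E : Type*} [Fintype ι] [MeasurableSpace E]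
    (μ : Measure E) [SigmaFinite μ] (f : ι → E → ℝ≥0∞) (hf : ∀ i, Measurable (f i)) :
    ∫⁻ x : ι → E, ∏ i, f i (x i) ∂(Measure.pi fun _ => μ) = ∏ i, ∫⁻ y, f i y ∂μ := by
  let e := (Fintype.equivFin ι).symm
  rw [← (measurePreserving_piCongrLeft (fun _ => μ) e).lintegral_comp (by fun_prop)]
  simp_rw [← e.prod_comp, MeasurableEquiv.coe_piCongrLeft, Equiv.piCongrLeft_apply_apply]
  exact lintegral_fin_prod_eq_prod μ _ fun i => hf (e i)

section Pi

variable {ι E : Type*} [Fintype ι] [MeasurableSpace E] {μ : Measure E} [SigmaFinite μ]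

theorem lintegral_pi_prod_mul_eval (g : ι → E → ℝ≥0∞) (hg : ∀ k, Measurable (g k))
    (hg1 : ∀ k, ∫⁻ x, g k x ∂μ = 1) {φ : E → ℝ≥0∞} (hφ : Measurable φ) (i : ι) :
    ∫⁻ w : ι → E, (∏ k, g k (w k)) * φ (w i) ∂(Measure.pi fun _ => μ) =
      ∫⁻ x, g i x * φ x ∂μ := by
  classical
  simp_rw [← Fintype.prod_update_mul_eval]
  rw [lintegral_fintype_prod_eq_prod μ _ fun k => ?_, Finset.prod_eq_single i]
  · simp
  · intro k _ hk
    simp [hk, hg1]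
  · simp
  · rcases eq_or_ne k i with rfl | hk
    · rw [Function.update_self]
      exact (hg k).mul hφ
    · simpa [hk] using hg k

theorem integral_pi_prod_mul_eval (g : ι → E → ℝ) (hg1 : ∀ k, ∫ x, g k x ∂μ = 1) (φ : E → ℝ)
    (i : ι) :
    ∫ w : ι → E, (∏ k, g k (w k)) * φ (w i) ∂(Measure.pi fun _ => μ) = ∫ x, g i x * φ x ∂μ := by
  classical
  simp_rw [← Fintype.prod_update_mul_eval, integral_fintype_prod_eq_prod]
  rw [Finset.prod_eq_single i]
  · simp
  · intro k _ hk
    simp [hk, hg1]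
  · simp

theorem integrable_pi_prod_mul_eval {g : ι → E → ℝ} (hg : ∀ k, Integrable (g k) μ) {φ : E → ℝ}
    (i : ι) (hφ : Integrable (fun x => g i x * φ x) μ) :
    Integrable (fun w : ι → E => (∏ k, g k (w k)) * φ (w i)) (Measure.pi fun _ => μ) := by
  classical
  simp_rw [← Fintype.prod_update_mul_eval]
  refine Integrable.fintype_prod fun k => ?_
  rcases eq_or_ne k i with rfl | hk
  · simpa using hφ
  · simpa [hk] using hg k

theorem integrable_pi_prod_mul_sum_eval {g φ : E → ℝ} (hg : Integrable g μ)
    (hφ : Integrable (fun x => g x * φ x) μ) (c : ℝ) :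
    Integrable (fun w : ι → E => (∏ k, g (w k)) * (c * ∑ i, φ (w i)))
      (Measure.pi fun _ => μ) := by
  simp_rw [mul_left_comm _ c]
  refine Integrable.const_mul ?_ c
  simp_rw [Finset.mul_sum]
  exact integrable_finsetSum _ fun i _ =>
    integrable_pi_prod_mul_eval (g := fun _ => g) (fun _ => hg) i hφ

theorem integral_pi_prod_mul_sum_eval {g : E → ℝ} (hg : Integrable g μ) (hg1 : ∫ x, g x ∂μ = 1)
    {φ : E → ℝ} (hφ : Integrable (fun x => g x * φ x) μ) (c : ℝ) :
    ∫ w : ι → E, (∏ k, g (w k)) * (c * ∑ i, φ (w i)) ∂(Measure.pi fun _ => μ) =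
      c * Fintype.card ι * ∫ x, g x * φ x ∂μ := by
  simp_rw [mul_left_comm _ c]
  rw [integral_const_mul]
  simp_rw [Finset.mul_sum]
  rw [integral_finsetSum _ fun i _ =>
    integrable_pi_prod_mul_eval (g := fun _ => g) (fun _ => hg) i hφ]
  simp [integral_pi_prod_mul_eval (fun _ => g) (fun _ => hg1), mul_assoc]

theorem lintegral_pi_prod_mul_tilted_le (g : ι → E → ℝ≥0∞) (hg : ∀ k, Measurable (g k))
    (hg1 : ∀ k, ∫⁻ x, g k x ∂μ = 1) {φ : E → ℝ≥0∞} (hφ : Measurable φ) (c : ℝ≥0∞) :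
    ∫⁻ w : ι → E, (∏ k, g k (w k)) * (c * ∑ i, φ (w i) / (c * ∑ j, g j (w i)))
        ∂(Measure.pi fun _ => μ) ≤ ∫⁻ x, φ x ∂μ := by
  set ψ : E → ℝ≥0∞ := fun x => c * (φ x / (c * ∑ j, g j x))
  have hψ : Measurable ψ := by
    have := Finset.measurable_sum Finset.univ fun j _ => hg j
    fun_prop
  calc ∫⁻ w : ι → E, (∏ k, g k (w k)) * (c * ∑ i, φ (w i) / (c * ∑ j, g j (w i)))
        ∂(Measure.pi fun _ => μ)
      = ∑ i, ∫⁻ w : ι → E, (∏ k, g k (w k)) * ψ (w i) ∂(Measure.pi fun _ => μ) := by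
        rw [← lintegral_finsetSum' _ fun i _ => by fun_prop]
        refine lintegral_congr fun w => ?_
        simp only [ψ, Finset.mul_sum]
    _ = ∫⁻ x, ∑ i, g i x * ψ x ∂μ := by
        rw [lintegral_finsetSum' _ fun i _ => by fun_prop]
        exact Finset.sum_congr rfl fun i _ => lintegral_pi_prod_mul_eval g hg hg1 hψ i
    _ ≤ ∫⁻ x, φ x ∂μ := by
        refine lintegral_mono fun x => ?_
        -- `D * (φ / D) ≤ φ` holds in `ℝ≥0∞` even for `D = 0` and `D = ∞`
        calc ∑ i, g i x * ψ x = (c * ∑ j, g j x) * (φ x / (c * ∑ j, g j x)) := by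
              rw [← Finset.sum_mul]; ring
          _ ≤ φ x := ENNReal.mul_div_le

theorem lintegral_pi_prod_tilted_le_one {Θ Y : Type*} [MeasurableSpace Θ] [MeasurableSpace Y]
    (P : Measure Θ) [IsProbabilityMeasure P] (ν : Measure Y) [SigmaFinite ν]
    (q : Y → Θ → ℝ≥0∞) (hq : Measurable fun z : Θ × Y => q z.2 z.1)
    (hq1 : ∀ θ, ∫⁻ y, q y θ ∂ν = 1) (c : ℝ≥0∞) :
    ∫⁻ w : ι → Θ × Y, (∏ k, q (w k).2 (w k).1) *
        (c * ∑ i, (∫⁻ θ, q (w i).2 θ ∂P) / (c * ∑ j, q (w i).2 (w j).1))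
        ∂(Measure.pi fun _ => P.prod ν) ≤ 1 := by
  set m : Y → ℝ≥0∞ := fun y => ∫⁻ θ, q y θ ∂P
  have hm : Measurable m := hq.lintegral_prod_left'
  have hq' : ∀ θ, Measurable fun y => q y θ := fun θ => hq.comp measurable_prodMk_left
  set F : (ι → Θ) × (ι → Y) → ℝ≥0∞ := fun ab =>
    (∏ k, q (ab.2 k) (ab.1 k)) * (c * ∑ i, m (ab.2 i) / (c * ∑ j, q (ab.2 i) (ab.1 j)))
  have hF : Measurable F := by
    have hqab : ∀ i j, Measurable fun ab : (ι → Θ) × (ι → Y) => q (ab.2 i) (ab.1 j) :=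
      fun i j => hq.comp (f := fun ab : (ι → Θ) × (ι → Y) => (ab.1 j, ab.2 i)) (by fun_prop)
    have hmb : ∀ i, Measurable fun ab : (ι → Θ) × (ι → Y) => m (ab.2 i) :=
      fun i => hm.comp (f := fun ab : (ι → Θ) × (ι → Y) => ab.2 i) (by fun_prop)
    exact (Finset.measurable_prod _ fun k _ => hqab k k).mul <|
      (Finset.measurable_sum _ fun i _ =>
        (hmb i).div ((Finset.measurable_sum _ fun j _ => hqab i j).const_mul c)).const_mul c
  calc _ = ∫⁻ ab, F ab ∂((Measure.pi fun _ => P).prod (Measure.pi fun _ => ν)) :=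
        (measurePreserving_arrowProdEquivProdArrow Θ Y ι _ _).lintegral_comp hF
    _ = ∫⁻ a, ∫⁻ b, F (a, b) ∂(Measure.pi fun _ => ν) ∂(Measure.pi fun _ => P) :=
        lintegral_prod _ hF.aemeasurable
    _ ≤ ∫⁻ _ : ι → Θ, ∫⁻ y, m y ∂ν ∂(Measure.pi fun _ => P) :=
        lintegral_mono fun a =>
          lintegral_pi_prod_mul_tilted_le (fun k y => q y (a k)) (fun k => hq' (a k))
            (fun k => hq1 (a k)) hm c
    _ = 1 := by
        rw [lintegral_const, measure_univ, mul_one, ← lintegral_lintegral_swap hq.aemeasurable]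
        simp [hq1]

end Pi

/-- With `c = 1/M`, the averaged posterior-tilted joint density: the density `∏ₖ l(yₖ|θₖ)` of the
samples reweighted by the mean over `i` of `p(yᵢ)/p̂(yᵢ)`, the ratio of the evidence
`p(y) = ∫ l(y|θ) dP(θ)` to its Monte-Carlo estimate `p̂(y) = c Σⱼ l(y|θⱼ)`. -/
noncomputable def tiltedJointDensity {ι Θ Y : Type*} [Fintype ι] [MeasurableSpace Θ]
    (P : Measure Θ) (l : Y → Θ → ℝ) (c : ℝ) (w : ι → Θ × Y) : ℝ :=
  (∏ k, l (w k).2 (w k).1) * (c * ∑ i, (∫ θ, l (w i).2 θ ∂P) / (c * ∑ j, l (w i).2 (w j).1))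

theorem tiltedJointDensity_nonneg {ι Θ Y : Type*} [Fintype ι] [MeasurableSpace Θ]
    {P : Measure Θ} {l : Y → Θ → ℝ} (hl : ∀ y θ, 0 ≤ l y θ) {c : ℝ} (hc : 0 ≤ c) (w : ι → Θ × Y) :
    0 ≤ tiltedJointDensity P l c w :=
  mul_nonneg (Finset.prod_nonneg fun _ _ => hl _ _) <| mul_nonneg hc <|
    Finset.sum_nonneg fun _ _ => div_nonneg (integral_nonneg (hl _)) <| mul_nonneg hc <|
      Finset.sum_nonneg fun _ _ => hl _ _

theorem prod_sub_tiltedJointDensity_le {ι Θ Y : Type*} [Fintype ι] [MeasurableSpace Θ]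
    {P : Measure Θ} {l : Y → Θ → ℝ} (hl : ∀ y θ, 0 < l y θ) {c : ℝ}
    (hc : c * Fintype.card ι = 1) (w : ι → Θ × Y) (hw : ∀ i, 0 < ∫ θ, l (w i).2 θ ∂P) :
    (∏ k, l (w k).2 (w k).1) - tiltedJointDensity P l c w ≤
      (∏ k, l (w k).2 (w k).1) * (c * ∑ i, log (l (w i).2 (w i).1 / ∫ θ, l (w i).2 θ ∂P)) -
        (∏ k, l (w k).2 (w k).1) *
          (c * ∑ i, log (l (w i).2 (w i).1 / (c * ∑ j, l (w i).2 (w j).1))) := by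
  have hcard : 0 < Fintype.card ι := Nat.pos_of_ne_zero fun h => by simp [h] at hc
  have hc0 : 0 < c := eq_inv_of_mul_eq_one_left hc ▸ inv_pos.2 (Nat.cast_pos.2 hcard)
  have hs : ∀ i, 0 < c * ∑ j, l (w i).2 (w j).1 := fun i => mul_pos hc0 <|
    Finset.sum_pos (fun _ _ => hl _ _) (Finset.univ_nonempty_iff.2 (Fintype.card_pos_iff.1 hcard))
  have hρ : 0 ≤ ∏ k, l (w k).2 (w k).1 := Finset.prod_nonneg fun _ _ => (hl _ _).le
  calc _ = (∏ k, l (w k).2 (w k).1) * (c * ∑ i,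
        (1 - (∫ θ, l (w i).2 θ ∂P) / (c * ∑ j, l (w i).2 (w j).1))) := by
        rw [tiltedJointDensity, Finset.sum_sub_distrib, Finset.sum_const, Finset.card_univ,
          nsmul_eq_mul, mul_one, mul_sub, hc]
        ring
    _ ≤ (∏ k, l (w k).2 (w k).1) * (c * ∑ i, (log (l (w i).2 (w i).1 / ∫ θ, l (w i).2 θ ∂P) -
        log (l (w i).2 (w i).1 / (c * ∑ j, l (w i).2 (w j).1)))) :=
        mul_le_mul_of_nonneg_left (mul_le_mul_of_nonneg_left (Finset.sum_le_sum fun i _ =>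
          Real.one_sub_div_le_log_div_sub_log_div (hl _ _) (hw i) (hs i)) hc0.le) hρ
    _ = _ := by rw [Finset.sum_sub_distrib]; ring

section Density

variable {ι Θ Y : Type*} [Fintype ι] [MeasurableSpace Θ] [MeasurableSpace Y] {P : Measure Θ}
  {ν : Measure Y} [SigmaFinite ν] {l : Y → Θ → ℝ}

theorem integrable_prod_of_density [IsFiniteMeasure P]
    (hml : Measurable fun z : Θ × Y => l z.2 z.1)
    (hl : ∀ y θ, 0 ≤ l y θ) (hnorm : ∀ θ, ∫ y, l y θ ∂ν = 1) :
    Integrable (fun z : Θ × Y => l z.2 z.1) (P.prod ν) := by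
  refine (integrable_prod_iff hml.aestronglyMeasurable).2 ⟨ae_of_all _ fun θ => ?_, ?_⟩
  · exact Integrable.of_integral_ne_zero (by simp [hnorm])
  · simp_rw [Real.norm_of_nonneg (hl _ _), hnorm]
    exact integrable_const 1

theorem integral_prod_of_density [IsProbabilityMeasure P]
    (hml : Measurable fun z : Θ × Y => l z.2 z.1) (hl : ∀ y θ, 0 ≤ l y θ)
    (hnorm : ∀ θ, ∫ y, l y θ ∂ν = 1) :
    ∫ z : Θ × Y, l z.2 z.1 ∂(P.prod ν) = 1 := by
  rw [integral_prod _ (integrable_prod_of_density hml hl hnorm)]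
  simp [hnorm]

theorem ae_pi_integral_pos_of_density [IsFiniteMeasure P] [NeZero P]
    (hml : Measurable fun z : Θ × Y => l z.2 z.1) (hl : ∀ y θ, 0 < l y θ)
    (hnorm : ∀ θ, ∫ y, l y θ ∂ν = 1) :
    ∀ᵐ w ∂(Measure.pi fun _ : ι => P.prod ν), ∀ i, 0 < ∫ θ, l (w i).2 θ ∂P := by
  -- only a.e.: where `l y` is not `P`-integrable its Bochner integral is `0`
  have hpos : ∀ᵐ y ∂ν, 0 < ∫ θ, l y θ ∂P := by
    filter_upwards [(integrable_prod_of_density (P := P) hml (fun y θ => (hl y θ).le)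
      hnorm).prod_left_ae] with y hy
    rw [integral_pos_iff_support_of_nonneg (fun θ => (hl y θ).le) hy]
    simpa [Function.support, (hl y _).ne'] using NeZero.ne P
  exact ae_all_iff.2 fun i => (Measure.tendsto_eval_ae_ae (i := i)).eventually
    (p := fun z : Θ × Y => 0 < ∫ θ, l z.2 θ ∂P) (Measure.quasiMeasurePreserving_snd.ae hpos)

theorem measurable_tiltedJointDensity [SFinite P] (hml : Measurable fun z : Θ × Y => l z.2 z.1)
    (c : ℝ) :
    Measurable (tiltedJointDensity P l c : (ι → Θ × Y) → ℝ) := by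
  have hp : Measurable fun y => ∫ θ, l y θ ∂P :=
    (hml.comp measurable_swap).stronglyMeasurable.integral_prod_right'.measurable
  have hlw : ∀ i j, Measurable fun w : ι → Θ × Y => l (w i).2 (w j).1 :=
    fun i j => hml.comp (f := fun w : ι → Θ × Y => ((w j).1, (w i).2)) (by fun_prop)
  exact (Finset.measurable_prod _ fun k _ => hlw k k).mul <|
    (Finset.measurable_sum _ fun i _ => (hp.comp (f := fun w : ι → Θ × Y => (w i).2)
      (by fun_prop)).div ((Finset.measurable_sum _ fun j _ => hlw i j).const_mul c)).const_mul c

theorem lintegral_ofReal_tiltedJointDensity_le_one [IsProbabilityMeasure P]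
    (hml : Measurable fun z : Θ × Y => l z.2 z.1) (hl : ∀ y θ, 0 ≤ l y θ)
    (hnorm : ∀ θ, ∫ y, l y θ ∂ν = 1) {c : ℝ} (hc : 0 ≤ c) :
    ∫⁻ w : ι → Θ × Y, ENNReal.ofReal (tiltedJointDensity P l c w)
      ∂(Measure.pi fun _ => P.prod ν) ≤ 1 := by
  refine le_trans (lintegral_mono fun w => ?_) (lintegral_pi_prod_tilted_le_one P ν
    (fun y θ => ENNReal.ofReal (l y θ)) hml.ennreal_ofReal (fun θ => ?_) (ENNReal.ofReal c))
  · have hT : ∀ i, 0 ≤ c * ∑ j, l (w i).2 (w j).1 := fun i =>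
      mul_nonneg hc (Finset.sum_nonneg fun j _ => hl _ _)
    calc ENNReal.ofReal (tiltedJointDensity P l c w)
        = (∏ k, ENNReal.ofReal (l (w k).2 (w k).1)) * (ENNReal.ofReal c *
            ∑ i, ENNReal.ofReal ((∫ θ, l (w i).2 θ ∂P) / (c * ∑ j, l (w i).2 (w j).1))) := by
          rw [tiltedJointDensity, ENNReal.ofReal_mul (Finset.prod_nonneg fun k _ => hl _ _),
            ENNReal.ofReal_prod_of_nonneg fun k _ => hl _ _, ENNReal.ofReal_mul hc,
            ENNReal.ofReal_sum_of_nonneg fun i _ => div_nonneg (integral_nonneg (hl _)) (hT i)]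
      _ ≤ _ := by
          gcongr with i
          rw [← ENNReal.ofReal_sum_of_nonneg fun j _ => hl _ _, ← ENNReal.ofReal_mul hc]
          exact (ENNReal.ofReal_div_le (hT i)).trans
            (by gcongr; exact ofReal_integral_le_lintegral_ofReal (hl _))
  · rw [← ofReal_integral_eq_lintegral_ofReal (.of_integral_ne_zero (by simp [hnorm]))
      (ae_of_all _ (hl · θ)), hnorm, ENNReal.ofReal_one]

theorem integrable_tiltedJointDensity [IsProbabilityMeasure P]
    (hml : Measurable fun z : Θ × Y => l z.2 z.1) (hl : ∀ y θ, 0 ≤ l y θ)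
    (hnorm : ∀ θ, ∫ y, l y θ ∂ν = 1) {c : ℝ} (hc : 0 ≤ c) :
    Integrable (tiltedJointDensity P l c : (ι → Θ × Y) → ℝ) (Measure.pi fun _ => P.prod ν) := by
  refine ⟨(measurable_tiltedJointDensity hml c).aestronglyMeasurable, ?_⟩
  rw [hasFiniteIntegral_iff_ofReal (ae_of_all _ (tiltedJointDensity_nonneg hl hc))]
  exact (lintegral_ofReal_tiltedJointDensity_le_one hml hl hnorm hc).trans_lt ENNReal.one_lt_top

theorem integral_tiltedJointDensity_le_one [IsProbabilityMeasure P]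
    (hml : Measurable fun z : Θ × Y => l z.2 z.1) (hl : ∀ y θ, 0 ≤ l y θ)
    (hnorm : ∀ θ, ∫ y, l y θ ∂ν = 1) {c : ℝ} (hc : 0 ≤ c) :
    ∫ w : ι → Θ × Y, tiltedJointDensity P l c w ∂(Measure.pi fun _ => P.prod ν) ≤ 1 := by
  rw [integral_eq_lintegral_of_nonneg_ae (ae_of_all _ (tiltedJointDensity_nonneg hl hc))
    (measurable_tiltedJointDensity hml c).aestronglyMeasurable]
  exact ENNReal.toReal_le_of_le_ofReal zero_le_one
    (by simpa using lintegral_ofReal_tiltedJointDensity_le_one hml hl hnorm hc)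

end Density

end MeasureTheory

/-- Theorem 2 (part 1): the expectation of the srNMC estimator
`Û^M_srNMC(λ) = (1/M) Σᵢ log[ l(yⁱ|θⁱ,λ) / ((1/M) Σⱼ l(yⁱ|θʲ,λ)) ]`
is a lower bound on the expected information gain `U(λ)` for every `M > 0`.
The `M` samples `(θⁱ, yⁱ)` are i.i.d. from the joint of parameter and observation:
`θⁱ ~ π_θ` and `yⁱ` has conditional density `l(·|θⁱ,λ)` w.r.t. a dominating
measure `ν` (the sampling path `yⁱ = g(θⁱ,εⁱ,λ)`), so the joint law has density
`z ↦ l(z.2|z.1,λ)` w.r.t. `Pθ ⊗ ν`, and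
`U(λ) = E[log (l(y|θ,λ)/p(y|λ))]` with marginal `p(y|λ) = ∫ π_θ(θ') l(y|θ',λ) dθ'`. -/
theorem srNMC_expectation_lower_bound
    {Θ Y : Type*} [MeasurableSpace Θ] [MeasurableSpace Y]
    (Pθ : Measure Θ) [IsProbabilityMeasure Pθ]
    (ν : Measure Y) [SigmaFinite ν]
    (l : Y → Θ → ℝ)
    (hml : Measurable fun z : Θ × Y => l z.2 z.1)
    (hl : ∀ y θ, 0 < l y θ)
    -- `l(·|θ,λ)` is a probability density w.r.t. `ν` for every `θ`
    (hnorm : ∀ θ, ∫ y, l y θ ∂ν = 1)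
    (M : ℕ) (hM : 0 < M)
    -- integrability (all expectations are finite)
    (hIntU : Integrable
      (fun z : Θ × Y => l z.2 z.1 * Real.log (l z.2 z.1 / ∫ θ', l z.2 θ' ∂Pθ))
      (Pθ.prod ν))
    (hIntE : Integrable
      (fun w : Fin M → Θ × Y => (∏ i, l (w i).2 (w i).1) *
        ((M : ℝ)⁻¹ * ∑ i, Real.log (l (w i).2 (w i).1 /
          ((M : ℝ)⁻¹ * ∑ j, l (w i).2 (w j).1))))
      (Measure.pi fun _ : Fin M => Pθ.prod ν)) :
    (∫ w : Fin M → Θ × Y, (∏ i, l (w i).2 (w i).1) *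
        ((M : ℝ)⁻¹ * ∑ i, Real.log (l (w i).2 (w i).1 /
          ((M : ℝ)⁻¹ * ∑ j, l (w i).2 (w j).1)))
        ∂(Measure.pi fun _ : Fin M => Pθ.prod ν)) ≤
      ∫ z : Θ × Y, l z.2 z.1 * Real.log (l z.2 z.1 / ∫ θ', l z.2 θ' ∂Pθ)
        ∂(Pθ.prod ν) := by
  have hl0 : ∀ y θ, 0 ≤ l y θ := fun y θ => (hl y θ).le
  have hMinv : (0 : ℝ) ≤ (M : ℝ)⁻¹ := inv_nonneg.2 M.cast_nonneg
  have hcard : (M : ℝ)⁻¹ * Fintype.card (Fin M) = 1 := by simp [hM.ne']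
  have hjoint := integrable_prod_of_density (P := Pθ) hml hl0 hnorm
  have hjoint1 := integral_prod_of_density (P := Pθ) hml hl0 hnorm
  have hU := integral_pi_prod_mul_sum_eval (ι := Fin M) hjoint hjoint1 hIntU (M : ℝ)⁻¹
  rw [hcard, one_mul] at hU
  have hρ : ∫ w : Fin M → Θ × Y, ∏ i, l (w i).2 (w i).1 ∂(Measure.pi fun _ => Pθ.prod ν) = 1 := by
    rw [integral_fintype_prod_eq_pow (fun z : Θ × Y => l z.2 z.1), hjoint1, one_pow]
  have hgibbs := (ae_pi_integral_pos_of_density (ι := Fin M) (P := Pθ) hml hl hnorm).mono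
    fun w hw => prod_sub_tiltedJointDensity_le hl hcard w hw
  have hH := integral_tiltedJointDensity_le_one (ι := Fin M) (P := Pθ) hml hl0 hnorm hMinv
  rw [← hU]
  exact integral_le_integral_of_ae_sub_le_sub (Integrable.fintype_prod fun _ => hjoint)
    (integrable_tiltedJointDensity hml hl0 hnorm hMinv)
    (integrable_pi_prod_mul_sum_eval hjoint hIntU _) hIntE hgibbs (hρ ▸ hH)
end

section
/- The srNMC estimator is deterministically bounded above by log M: for any samples, Û^M_srNMC(λ) = (1/M) Σ_{i=1}^M log[ l(y^(i)|θ^(i),λ) / ((1/M) Σ_{j=1}^M l(y^(i)|θ^(j),λ)) ] ≤ log M. -/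
/-! The diagonal likelihood `l(yⁱ|θⁱ)` is one of the nonnegative terms of the sum in the
denominator, so every ratio is at most `M`; hence every summand, and so their average, is at
most `log M`. -/

open Real Finset

theorem div_inv_card_mul_sum_le_card {ι : Type*} {s : Finset ι} {f : ι → ℝ}
    (hf : ∀ j ∈ s, 0 ≤ f j) {i : ι} (hi : i ∈ s) :
    f i / ((#s : ℝ)⁻¹ * ∑ j ∈ s, f j) ≤ #s := by
  have hfi : f i / ∑ j ∈ s, f j ≤ 1 :=
    div_le_one_of_le₀ (single_le_sum hf hi) (sum_nonneg hf)
  calc f i / ((#s : ℝ)⁻¹ * ∑ j ∈ s, f j) = #s * (f i / ∑ j ∈ s, f j) := by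
        rw [inv_mul_eq_div, div_div_eq_mul_div]; ring
    _ ≤ #s * 1 := by gcongr
    _ = #s := mul_one _

theorem Real.log_le_log_natCast {x : ℝ} {n : ℕ} (hx : 0 ≤ x) (hxn : x ≤ n) :
    log x ≤ log n := by
  rcases hx.eq_or_lt with rfl | hx
  · simpa using log_natCast_nonneg n
  · exact log_le_log hx hxn

theorem inv_card_mul_sum_le {ι : Type*} {s : Finset ι} {a : ι → ℝ} {c : ℝ}
    (ha : ∀ i ∈ s, a i ≤ c) (hc : 0 ≤ c) : (#s : ℝ)⁻¹ * ∑ i ∈ s, a i ≤ c := by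
  rcases s.eq_empty_or_nonempty with rfl | hs
  · simpa using hc
  have hcard : (0 : ℝ) < #s := by exact_mod_cast hs.card_pos
  rw [inv_mul_le_iff₀ hcard]
  simpa using sum_le_card_nsmul s a c ha

theorem srNMC_le_log_M_general
    {Θ Y : Type*} (l : Y → Θ → ℝ) (hl : ∀ y θ, 0 < l y θ)
    (M : ℕ) (θs : Fin M → Θ) (ys : Fin M → Y) :
    (M : ℝ)⁻¹ * ∑ i, Real.log (l (ys i) (θs i) /
        ((M : ℝ)⁻¹ * ∑ j, l (ys i) (θs j))) ≤ Real.log M := by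
  have hratio (i : Fin M) : l (ys i) (θs i) / ((M : ℝ)⁻¹ * ∑ j, l (ys i) (θs j)) ≤ M := by
    simpa using div_inv_card_mul_sum_le_card (s := univ) (fun j _ ↦ (hl (ys i) (θs j)).le)
      (mem_univ i)
  have hterm (i : Fin M) :
      log (l (ys i) (θs i) / ((M : ℝ)⁻¹ * ∑ j, l (ys i) (θs j))) ≤ log M := by
    refine log_le_log_natCast (div_nonneg (hl _ _).le ?_) (hratio i)
    exact mul_nonneg (by positivity) (sum_nonneg fun j _ ↦ (hl _ _).le)
  simpa using inv_card_mul_sum_le (s := univ) (fun i _ ↦ hterm i) (log_natCast_nonneg M)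

/-- The srNMC estimator is deterministically bounded above by `log M`:
for any samples `θⁱ` with observations `yⁱ` and positive likelihood `l`,
`(1/M) Σᵢ log[ l(yⁱ|θⁱ) / ((1/M) Σⱼ l(yⁱ|θʲ)) ] ≤ log M`. -/
theorem srNMC_le_log_M
    {Θ Y : Type*} (l : Y → Θ → ℝ) (hl : ∀ y θ, 0 < l y θ)
    (M : ℕ) (hM : 1 ≤ M) (θs : Fin M → Θ) (ys : Fin M → Y) :
    (M : ℝ)⁻¹ * ∑ i, Real.log (l (ys i) (θs i) /
        ((M : ℝ)⁻¹ * ∑ j, l (ys i) (θs j))) ≤ Real.log M :=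
  srNMC_le_log_M_general l hl M θs ys
end
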